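/- arXiv:0705.2095 — 2 statements merged into one kernel-verified Lean document; each statement's English description precedes it below -/
import Mathlib

section
/- The set 𝒢 of all characters of the algebra 𝒜 of periodic functions on ℤ is a commutative ring with addition the plus-convolution ⊕, multiplication the dot-convolution ⊙, additive inverse the reflection ⊖, zero element θ = (u ↦ u(0)) and unit element ε = (u ↦ u(1)); in particular ⊕ and ⊙ are commutative and associative on 𝒢, θ and ε are neutral for ⊕ and ⊙ respectively, χ ⊕ (⊖χ) = θ for every character χ, and (φ⊕ψ)⊙χ = (φ⊙χ)⊕(ψ⊙χ) for all characters φ, ψ, χ. -/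
open Function

noncomputable section

/-- The subalgebra of `ℤ → ℂ` consisting of all periodic functions. -/
def PerFun : Subalgebra ℂ (ℤ → ℂ) where
  carrier := {u | ∃ p : ℤ, 0 < p ∧ Function.Periodic u p}
  add_mem' := by
    rintro u v ⟨p, hp, hu⟩ ⟨q, hq, hv⟩
    refine ⟨p * q, mul_pos hp hq, ?_⟩
    have hu' : Function.Periodic u (p * q) := by simpa [mul_comm] using hu.int_mul q
    have hv' : Function.Periodic v (p * q) := hv.int_mul p
    exact hu'.add hv'
  mul_mem' := by
    rintro u v ⟨p, hp, hu⟩ ⟨q, hq, hv⟩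
    refine ⟨p * q, mul_pos hp hq, ?_⟩
    have hu' : Function.Periodic u (p * q) := by simpa [mul_comm] using hu.int_mul q
    have hv' : Function.Periodic v (p * q) := hv.int_mul p
    exact hu'.mul hv'
  one_mem' := ⟨1, one_pos, fun _ => rfl⟩
  zero_mem' := ⟨1, one_pos, fun _ => rfl⟩
  algebraMap_mem' := fun c => ⟨1, one_pos, fun _ => rfl⟩

/-- `u` belongs to the subalgebra `𝒜_p` of `p`-periodic functions. -/
def InAp (p : ℤ) (u : ↥PerFun) : Prop := Function.Periodic (u : ℤ → ℂ) p

/-- A character of the algebra `𝒜` of periodic functions: a nonzero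
`ℂ`-linear multiplicative functional. -/
def IsChar (ψ : ↥PerFun → ℂ) : Prop :=
  (∀ u v, ψ (u + v) = ψ u + ψ v) ∧
  (∀ (c : ℂ) (u), ψ (c • u) = c * ψ u) ∧
  (∀ u v, ψ (u * v) = ψ u * ψ v) ∧
  ψ ≠ 0

lemma shiftAdd_mem (u : ↥PerFun) (x : ℤ) :
    (fun y => (u : ℤ → ℂ) (x + y)) ∈ PerFun := by
  obtain ⟨p, hp, hu⟩ := u.2
  refine ⟨p, hp, fun y => ?_⟩
  show (u : ℤ → ℂ) (x + (y + p)) = (u : ℤ → ℂ) (x + y)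
  rw [← add_assoc]
  exact hu (x + y)

/-- For `u ∈ 𝒜`, the function `y ↦ u (x + y)`, as an element of `𝒜`. -/
def shiftAdd (u : ↥PerFun) (x : ℤ) : ↥PerFun :=
  ⟨fun y => (u : ℤ → ℂ) (x + y), shiftAdd_mem u x⟩

lemma shiftMul_mem (u : ↥PerFun) (x : ℤ) :
    (fun y => (u : ℤ → ℂ) (x * y)) ∈ PerFun := by
  obtain ⟨p, hp, hu⟩ := u.2
  refine ⟨p, hp, fun y => ?_⟩
  show (u : ℤ → ℂ) (x * (y + p)) = (u : ℤ → ℂ) (x * y)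
  rw [mul_add]
  exact (hu.int_mul x) (x * y)

/-- For `u ∈ 𝒜`, the function `y ↦ u (x * y)`, as an element of `𝒜`. -/
def shiftMul (u : ↥PerFun) (x : ℤ) : ↥PerFun :=
  ⟨fun y => (u : ℤ → ℂ) (x * y), shiftMul_mem u x⟩

lemma negArg_mem (u : ↥PerFun) :
    (fun y => (u : ℤ → ℂ) (-y)) ∈ PerFun := by
  obtain ⟨p, hp, hu⟩ := u.2
  refine ⟨p, hp, fun y => ?_⟩
  show (u : ℤ → ℂ) (-(y + p)) = (u : ℤ → ℂ) (-y)
  rw [neg_add, ← sub_eq_add_neg]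
  exact hu.sub_eq (-y)

/-- For `u ∈ 𝒜`, the function `x ↦ u (-x)`, as an element of `𝒜`. -/
def negArg (u : ↥PerFun) : ↥PerFun :=
  ⟨fun y => (u : ℤ → ℂ) (-y), negArg_mem u⟩

lemma plusInner_mem (ψ : ↥PerFun → ℂ) (u : ↥PerFun) :
    (fun x => ψ (shiftAdd u x)) ∈ PerFun := by
  obtain ⟨p, hp, hu⟩ := u.2
  refine ⟨p, hp, fun x => ?_⟩
  show ψ (shiftAdd u (x + p)) = ψ (shiftAdd u x)
  congr 1
  apply Subtype.ext
  funext y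
  show (u : ℤ → ℂ) (x + p + y) = (u : ℤ → ℂ) (x + y)
  rw [show x + p + y = x + y + p by ring]
  exact hu (x + y)

lemma dotInner_mem (ψ : ↥PerFun → ℂ) (u : ↥PerFun) :
    (fun x => ψ (shiftMul u x)) ∈ PerFun := by
  obtain ⟨p, hp, hu⟩ := u.2
  refine ⟨p, hp, fun x => ?_⟩
  show ψ (shiftMul u (x + p)) = ψ (shiftMul u x)
  congr 1
  apply Subtype.ext
  funext y
  show (u : ℤ → ℂ) ((x + p) * y) = (u : ℤ → ℂ) (x * y)
  rw [show (x + p) * y = x * y + y * p by ring]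
  exact (hu.int_mul y) (x * y)

/-- The plus-convolution `(φ ⊕ ψ)(u) = φ (x ↦ ψ (y ↦ u (x + y)))`. -/
def plusConv (φ ψ : ↥PerFun → ℂ) : ↥PerFun → ℂ :=
  fun u => φ ⟨fun x => ψ (shiftAdd u x), plusInner_mem ψ u⟩

/-- The dot-convolution `(φ ⊙ ψ)(u) = φ (x ↦ ψ (y ↦ u (x * y)))`. -/
def dotConv (φ ψ : ↥PerFun → ℂ) : ↥PerFun → ℂ :=
  fun u => φ ⟨fun x => ψ (shiftMul u x), dotInner_mem ψ u⟩

/-- The reflection `(⊖ φ)(u) = φ (x ↦ u (-x))`. -/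
def reflect (φ : ↥PerFun → ℂ) : ↥PerFun → ℂ :=
  fun u => φ (negArg u)

/-- The functional `θ : u ↦ u 0`. -/
def theta : ↥PerFun → ℂ := fun u => (u : ℤ → ℂ) 0

/-- The functional `ε : u ↦ u 1`. -/
def eps : ↥PerFun → ℂ := fun u => (u : ℤ → ℂ) 1

/-!
On the subalgebra of `p`-periodic functions every character is evaluation at a point: the
indicators `δ_a` of the residue classes mod `p` sum to `1`, so a character `ψ` is nonzero on
some `δ_a`, and `u * δ_a = u a • δ_a` for `p`-periodic `u` forces `ψ u = u a`. Conversely a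
functional that is a point evaluation on each `𝒜_p` is a character. If `φ` and `ψ` evaluate at
`a` and `b` on `𝒜_p`, then `φ ⊕ ψ`, `φ ⊙ ψ` and `⊖ φ` evaluate at `a + b`, `a * b` and `-a`,
so the ring axioms of `ℤ` transfer to characters.
-/

theorem Function.Periodic.eq_of_intCast_eq {α : Type*} {p : ℕ} {u : ℤ → α}
    (hu : Periodic u p) {m n : ℤ} (h : (m : ZMod p) = n) : u m = u n := by
  obtain ⟨k, hk⟩ := (ZMod.intCast_eq_intCast_iff_dvd_sub m n p).1 h
  rw [sub_eq_iff_eq_add'.1 hk, mul_comm]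
  exact ((hu.int_mul k) m).symm

namespace PerFun

theorem exists_nat_period (u : ↥PerFun) :
    ∃ p : ℕ, 0 < p ∧ Periodic (u : ℤ → ℂ) p := by
  obtain ⟨p, hp, hu⟩ := u.2
  lift p to ℕ using hp.le
  exact ⟨p, by exact_mod_cast hp, hu⟩

theorem exists_common_nat_period (u v : ↥PerFun) :
    ∃ p : ℕ, 0 < p ∧ Periodic (u : ℤ → ℂ) p ∧ Periodic (v : ℤ → ℂ) p := by
  obtain ⟨p, hp, hu⟩ := exists_nat_period u
  obtain ⟨q, hq, hv⟩ := exists_nat_period v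
  refine ⟨q * p, Nat.mul_pos hq hp, ?_, ?_⟩
  · simpa using hu.nat_mul q
  · simpa [mul_comm] using hv.nat_mul p

def residueIndicator (p : ℕ) [NeZero p] (a : ZMod p) : ↥PerFun :=
  ⟨fun n => if (n : ZMod p) = a then 1 else 0,
    p, by exact_mod_cast NeZero.pos p, fun n => by simp⟩

variable {p : ℕ} [NeZero p]

theorem sum_residueIndicator : ∑ a : ZMod p, residueIndicator p a = 1 := by
  ext n
  simp [residueIndicator, Finset.sum_apply]

theorem mul_residueIndicator {u : ↥PerFun} (hu : Periodic (u : ℤ → ℂ) p) (a : ZMod p) :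
    u * residueIndicator p a = (u : ℤ → ℂ) a.val • residueIndicator p a := by
  ext n
  by_cases hn : (n : ZMod p) = a
  · have hval : (u : ℤ → ℂ) n = (u : ℤ → ℂ) a.val := hu.eq_of_intCast_eq (by simp [hn])
    simp [residueIndicator, hn, hval]
  · simp [residueIndicator, hn]

section

variable {c : ℤ} {u : ↥PerFun}

theorem periodic_shiftAdd (hu : Periodic (u : ℤ → ℂ) c) (x : ℤ) :
    Periodic (shiftAdd u x : ℤ → ℂ) c :=
  hu.const_add x

theorem periodic_shiftMul (hu : Periodic (u : ℤ → ℂ) c) (x : ℤ) :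
    Periodic (shiftMul u x : ℤ → ℂ) c := fun y => by
  simpa [shiftMul, mul_add] using (hu.int_mul x) (x * y)

theorem periodic_negArg (hu : Periodic (u : ℤ → ℂ) c) : Periodic (negArg u : ℤ → ℂ) c :=
  fun y => by simpa [negArg, sub_eq_neg_add] using hu.sub_eq (-y)

end

end PerFun

open PerFun

def EvalOn (p : ℕ) (F : ↥PerFun → ℂ) (a : ℤ) : Prop :=
  ∀ u : ↥PerFun, Periodic (u : ℤ → ℂ) p → F u = (u : ℤ → ℂ) a

def IsEvalOnPeriods (F : ↥PerFun → ℂ) : Prop :=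
  ∀ p : ℕ, 0 < p → ∃ a, EvalOn p F a

theorem AlgHom.exists_evalOn (ψ : ↥PerFun →ₐ[ℂ] ℂ) (p : ℕ) [NeZero p] :
    ∃ a, EvalOn p ψ a := by
  obtain ⟨a, -, ha⟩ : ∃ a ∈ Finset.univ, ψ (residueIndicator p a) ≠ 0 := by
    apply Finset.exists_ne_zero_of_sum_ne_zero
    simp [← map_sum, sum_residueIndicator]
  refine ⟨a.val, fun u hu => mul_right_cancel₀ ha ?_⟩
  rw [← map_mul, mul_residueIndicator hu, map_smul, smul_eq_mul]

namespace IsChar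

variable {ψ : ↥PerFun → ℂ}

theorem map_one (hψ : IsChar ψ) : ψ 1 = 1 := by
  obtain ⟨u, hu⟩ : ∃ u, ψ u ≠ 0 := by
    by_contra! h
    exact hψ.2.2.2 (funext h)
  have h := hψ.2.2.1 u 1
  rw [mul_one] at h
  exact (mul_eq_left₀ hu).1 h.symm

def toAlgHom (hψ : IsChar ψ) : ↥PerFun →ₐ[ℂ] ℂ :=
  AlgHom.ofLinearMap ⟨⟨ψ, hψ.1⟩, hψ.2.1⟩ hψ.map_one hψ.2.2.1

theorem isEvalOnPeriods (hψ : IsChar ψ) : IsEvalOnPeriods ψ := fun p hp =>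
  haveI : NeZero p := ⟨hp.ne'⟩
  hψ.toAlgHom.exists_evalOn p

end IsChar

theorem IsEvalOnPeriods.isChar {F : ↥PerFun → ℂ} (hF : IsEvalOnPeriods F) : IsChar F := by
  refine ⟨fun u v => ?_, fun c u => ?_, fun u v => ?_, fun h => ?_⟩
  · obtain ⟨p, hp, hu, hv⟩ := exists_common_nat_period u v
    obtain ⟨a, ha⟩ := hF p hp
    rw [ha u hu, ha v hv, ha _ (hu.add hv)]
    rfl
  · obtain ⟨p, hp, hu⟩ := exists_nat_period u
    obtain ⟨a, ha⟩ := hF p hp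
    rw [ha u hu, ha _ (hu.smul c)]
    rfl
  · obtain ⟨p, hp, hu, hv⟩ := exists_common_nat_period u v
    obtain ⟨a, ha⟩ := hF p hp
    rw [ha u hu, ha v hv, ha _ (hu.mul hv)]
    rfl
  · obtain ⟨a, ha⟩ := hF 1 one_pos
    simpa [h] using ha 1 fun _ => rfl

section EvalOn

variable {p : ℕ} {φ ψ : ↥PerFun → ℂ} {a b : ℤ}

theorem evalOn_theta (p : ℕ) : EvalOn p theta 0 := fun _ _ => rfl

theorem evalOn_eps (p : ℕ) : EvalOn p eps 1 := fun _ _ => rfl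

theorem EvalOn.plusConv (hφ : EvalOn p φ a) (hψ : EvalOn p ψ b) :
    EvalOn p (plusConv φ ψ) (a + b) := by
  intro u hu
  have hinner : (⟨fun x => ψ (shiftAdd u x), plusInner_mem ψ u⟩ : ↥PerFun) = shiftAdd u b :=
    Subtype.ext <| funext fun x =>
      (hψ _ (periodic_shiftAdd hu x)).trans <| congrArg (u : ℤ → ℂ) (add_comm x b)
  change φ _ = _
  rw [hinner, hφ _ (periodic_shiftAdd hu b)]
  exact congrArg (u : ℤ → ℂ) (add_comm b a)

theorem EvalOn.dotConv (hφ : EvalOn p φ a) (hψ : EvalOn p ψ b) :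
    EvalOn p (dotConv φ ψ) (a * b) := by
  intro u hu
  have hinner : (⟨fun x => ψ (shiftMul u x), dotInner_mem ψ u⟩ : ↥PerFun) = shiftMul u b :=
    Subtype.ext <| funext fun x =>
      (hψ _ (periodic_shiftMul hu x)).trans <| congrArg (u : ℤ → ℂ) (mul_comm x b)
  change φ _ = _
  rw [hinner, hφ _ (periodic_shiftMul hu b)]
  exact congrArg (u : ℤ → ℂ) (mul_comm b a)

theorem EvalOn.reflect (hφ : EvalOn p φ a) : EvalOn p (reflect φ) (-a) := fun _ hu =>
  hφ _ (periodic_negArg hu)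

end EvalOn

theorem eq_of_forall_evalOn {F G : ↥PerFun → ℂ}
    (h : ∀ p : ℕ, 0 < p → ∃ a, EvalOn p F a ∧ EvalOn p G a) : F = G := by
  funext u
  obtain ⟨p, hp, hu⟩ := exists_nat_period u
  obtain ⟨a, hF, hG⟩ := h p hp
  rw [hF u hu, hG u hu]

theorem plusConv_assoc (φ ψ χ : ↥PerFun → ℂ) :
    plusConv (plusConv φ ψ) χ = plusConv φ (plusConv ψ χ) := by
  funext u
  simp only [plusConv, shiftAdd, add_assoc]

theorem dotConv_assoc (φ ψ χ : ↥PerFun → ℂ) :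
    dotConv (dotConv φ ψ) χ = dotConv φ (dotConv ψ χ) := by
  funext u
  simp only [dotConv, shiftMul, mul_assoc]

theorem plusConv_theta (φ : ↥PerFun → ℂ) : plusConv φ theta = φ := by
  funext u
  simp only [plusConv, theta, shiftAdd, add_zero]

theorem dotConv_eps (φ : ↥PerFun → ℂ) : dotConv φ eps = φ := by
  funext u
  simp only [dotConv, eps, shiftMul, mul_one]

theorem isChar_theta : IsChar theta :=
  IsEvalOnPeriods.isChar fun p _ => ⟨0, evalOn_theta p⟩

theorem isChar_eps : IsChar eps :=
  IsEvalOnPeriods.isChar fun p _ => ⟨1, evalOn_eps p⟩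

namespace IsChar

variable {φ ψ χ : ↥PerFun → ℂ}

theorem plusConv (hφ : IsChar φ) (hψ : IsChar ψ) : IsChar (plusConv φ ψ) :=
  IsEvalOnPeriods.isChar fun p hp => by
    obtain ⟨a, ha⟩ := hφ.isEvalOnPeriods p hp
    obtain ⟨b, hb⟩ := hψ.isEvalOnPeriods p hp
    exact ⟨a + b, ha.plusConv hb⟩

theorem dotConv (hφ : IsChar φ) (hψ : IsChar ψ) : IsChar (dotConv φ ψ) :=
  IsEvalOnPeriods.isChar fun p hp => by
    obtain ⟨a, ha⟩ := hφ.isEvalOnPeriods p hp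
    obtain ⟨b, hb⟩ := hψ.isEvalOnPeriods p hp
    exact ⟨a * b, ha.dotConv hb⟩

theorem reflect (hφ : IsChar φ) : IsChar (reflect φ) :=
  IsEvalOnPeriods.isChar fun p hp => by
    obtain ⟨a, ha⟩ := hφ.isEvalOnPeriods p hp
    exact ⟨-a, ha.reflect⟩

theorem plusConv_comm (hφ : IsChar φ) (hψ : IsChar ψ) :
    _root_.plusConv φ ψ = _root_.plusConv ψ φ :=
  eq_of_forall_evalOn fun p hp => by
    obtain ⟨a, ha⟩ := hφ.isEvalOnPeriods p hp
    obtain ⟨b, hb⟩ := hψ.isEvalOnPeriods p hp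
    exact ⟨a + b, ha.plusConv hb, add_comm b a ▸ hb.plusConv ha⟩

theorem dotConv_comm (hφ : IsChar φ) (hψ : IsChar ψ) :
    _root_.dotConv φ ψ = _root_.dotConv ψ φ :=
  eq_of_forall_evalOn fun p hp => by
    obtain ⟨a, ha⟩ := hφ.isEvalOnPeriods p hp
    obtain ⟨b, hb⟩ := hψ.isEvalOnPeriods p hp
    exact ⟨a * b, ha.dotConv hb, mul_comm b a ▸ hb.dotConv ha⟩

theorem plusConv_reflect_cancel (hχ : IsChar χ) :
    _root_.plusConv χ (_root_.reflect χ) = theta :=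
  eq_of_forall_evalOn fun p hp => by
    obtain ⟨a, ha⟩ := hχ.isEvalOnPeriods p hp
    exact ⟨0, add_neg_cancel a ▸ ha.plusConv ha.reflect, evalOn_theta p⟩

theorem plusConv_dotConv (hφ : IsChar φ) (hψ : IsChar ψ) (hχ : IsChar χ) :
    _root_.dotConv (_root_.plusConv φ ψ) χ =
      _root_.plusConv (_root_.dotConv φ χ) (_root_.dotConv ψ χ) :=
  eq_of_forall_evalOn fun p hp => by
    obtain ⟨a, ha⟩ := hφ.isEvalOnPeriods p hp
    obtain ⟨b, hb⟩ := hψ.isEvalOnPeriods p hp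
    obtain ⟨c, hc⟩ := hχ.isEvalOnPeriods p hp
    exact ⟨(a + b) * c, (ha.plusConv hb).dotConv hc,
      add_mul a b c ▸ (ha.dotConv hc).plusConv (hb.dotConv hc)⟩

end IsChar

/-- The set `𝒢` of characters of `𝒜` is a commutative ring under the
plus-convolution `⊕` (addition), the dot-convolution `⊙` (multiplication),
the reflection `⊖` (additive inverse), with zero `θ = (u ↦ u 0)` and unit
`ε = (u ↦ u 1)`. -/
theorem characters_commutative_ring :
    IsChar theta ∧ IsChar eps ∧
    (∀ φ ψ, IsChar φ → IsChar ψ → IsChar (plusConv φ ψ)) ∧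
    (∀ φ ψ, IsChar φ → IsChar ψ → IsChar (dotConv φ ψ)) ∧
    (∀ φ, IsChar φ → IsChar (reflect φ)) ∧
    (∀ φ ψ, IsChar φ → IsChar ψ → plusConv φ ψ = plusConv ψ φ) ∧
    (∀ φ ψ χ, IsChar φ → IsChar ψ → IsChar χ →
      plusConv (plusConv φ ψ) χ = plusConv φ (plusConv ψ χ)) ∧
    (∀ φ ψ, IsChar φ → IsChar ψ → dotConv φ ψ = dotConv ψ φ) ∧
    (∀ φ ψ χ, IsChar φ → IsChar ψ → IsChar χ →
      dotConv (dotConv φ ψ) χ = dotConv φ (dotConv ψ χ)) ∧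
    (∀ φ, IsChar φ → plusConv φ theta = φ) ∧
    (∀ φ, IsChar φ → dotConv φ eps = φ) ∧
    (∀ χ, IsChar χ → plusConv χ (reflect χ) = theta) ∧
    (∀ φ ψ χ, IsChar φ → IsChar ψ → IsChar χ →
      dotConv (plusConv φ ψ) χ = plusConv (dotConv φ χ) (dotConv ψ χ)) :=
  ⟨isChar_theta, isChar_eps, fun _ _ => IsChar.plusConv, fun _ _ => IsChar.dotConv,
    fun _ => IsChar.reflect, fun _ _ => IsChar.plusConv_comm,
    fun φ ψ χ _ _ _ => plusConv_assoc φ ψ χ, fun _ _ => IsChar.dotConv_comm,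
    fun φ ψ χ _ _ _ => dotConv_assoc φ ψ χ, fun φ _ => plusConv_theta φ,
    fun φ _ => dotConv_eps φ, fun _ => IsChar.plusConv_reflect_cancel,
    fun _ _ _ => IsChar.plusConv_dotConv⟩
end
end

section
/- The polyadic ring 𝒫 with the topology σ (the ring topology having the principal ideals 𝒢^(n), n ∈ ℕ⁺, as a base of neighborhoods of zero) is a compact Hausdorff topological space. -/
open Filter

/-- `α` is a `0`-sequence: every positive integer divides `α k`
for all but finitely many `k`. -/
def IsZeroSeq (α : ℕ → ℤ) : Prop :=
  ∀ n : ℤ, 0 < n → ∀ᶠ k in Filter.cofinite, n ∣ α k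

/-- `α ≡ Sα`: the sequence `α` represents a polyadic number. -/
def RepsPolyadic (α : ℕ → ℤ) : Prop :=
  IsZeroSeq (fun k => α k - α (k + 1))

/-- The ideal `𝒞₀` of `0`-sequences in the ring `𝒞` of integer sequences. -/
def C0 : Ideal (ℕ → ℤ) where
  carrier := {α | IsZeroSeq α}
  add_mem' := by
    intro a b ha hb n hn
    filter_upwards [ha n hn, hb n hn] with k h1 h2
    exact dvd_add h1 h2
  zero_mem' := by
    intro n hn
    exact Filter.Eventually.of_forall fun k => dvd_zero n
  smul_mem' := by
    intro c a ha n hn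
    filter_upwards [ha n hn] with k h
    exact h.mul_left (c k)

/-- The quotient ring `𝒞 ⧸ 𝒞₀`. -/
abbrev CQuot := (ℕ → ℤ) ⧸ C0

/-- The ring `𝒫` of polyadic numbers: the subring of `𝒞 ⧸ 𝒞₀` consisting
of the classes containing a sequence `α` with `α ≡ Sα`. -/
def Polyadic : Subring CQuot where
  carrier := {x | ∃ α : ℕ → ℤ, RepsPolyadic α ∧ Ideal.Quotient.mk C0 α = x}
  zero_mem' := by
    refine ⟨0, ?_, map_zero _⟩
    intro n hn
    exact Filter.Eventually.of_forall fun k => by simp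
  one_mem' := by
    refine ⟨1, ?_, map_one _⟩
    intro n hn
    exact Filter.Eventually.of_forall fun k => by simp [Pi.one_apply]
  add_mem' := by
    rintro x y ⟨a, ha, rfl⟩ ⟨b, hb, rfl⟩
    refine ⟨a + b, ?_, map_add _ _ _⟩
    intro n hn
    filter_upwards [ha n hn, hb n hn] with k h1 h2
    have : (a + b) k - (a + b) (k + 1)
        = (a k - a (k + 1)) + (b k - b (k + 1)) := by
      simp [Pi.add_apply]; ring
    rw [this]
    exact dvd_add h1 h2
  neg_mem' := by
    rintro x ⟨a, ha, rfl⟩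
    refine ⟨-a, ?_, map_neg _ _⟩
    intro n hn
    filter_upwards [ha n hn] with k h1
    have : (-a) k - (-a) (k + 1) = -(a k - a (k + 1)) := by
      simp [Pi.neg_apply]; ring
    rw [this]
    exact h1.neg_right
  mul_mem' := by
    rintro x y ⟨a, ha, rfl⟩ ⟨b, hb, rfl⟩
    refine ⟨a * b, ?_, map_mul _ _ _⟩
    intro n hn
    filter_upwards [ha n hn, hb n hn] with k h1 h2
    have : (a * b) k - (a * b) (k + 1)
        = a k * (b k - b (k + 1)) + b (k + 1) * (a k - a (k + 1)) := by
      simp [Pi.mul_apply]; ring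
    rw [this]
    exact dvd_add (h2.mul_left (a k)) (h1.mul_left (b (k + 1)))

/-- The principal ideal `𝒢⁽ᵏ⁾ = {k·α : α ∈ 𝒫}` of the polyadic ring, as a set. -/
def GIdl (p : ℤ) : Set ↥Polyadic := {x | ∃ y : ↥Polyadic, x = (p : ↥Polyadic) * y}

/-- The grid `𝒢(p;a) = {a + γ : γ ∈ 𝒢⁽ᵖ⁾}`. -/
def Grid (p : ℤ) (a : ↥Polyadic) : Set ↥Polyadic := {x | ∃ γ ∈ GIdl p, x = a + γ}

/-- The canonical embedding `𝒵 : ℤ → 𝒫`, sending `m` to the class of the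
constant sequence with value `m`. -/
def Zemb (m : ℤ) : ↥Polyadic :=
  ⟨Ideal.Quotient.mk C0 (fun _ => m),
   ⟨fun _ => m, fun n hn => Filter.Eventually.of_forall fun k => by simp, rfl⟩⟩

/-- The topology `σ` on the polyadic ring `𝒫`: the ring topology having the
principal ideals `𝒢⁽ⁿ⁾`, `n ∈ ℕ⁺`, as a base of neighborhoods of zero;
equivalently, the topology generated by all grids `𝒢(p;a)`. -/
def sigmaTop : TopologicalSpace ↥Polyadic :=
  TopologicalSpace.generateFrom
    {S | ∃ p : ℤ, 0 < p ∧ ∃ a : ↥Polyadic, S = Grid p a}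

/-!
A positive integer `p` divides a polyadic number iff it divides almost all terms of a
representative. So every polyadic number is congruent modulo `p` to an integer, there are only
finitely many grids `𝒢(p; a)`, and a number divisible by every `p` is represented by a
`0`-sequence, which gives the Hausdorff property. For compactness, an ultrafilter contains for each
`n` a grid `𝒢(n!; cₙ)` with `cₙ ∈ ℤ`; consecutive ones meet, so `n! ∣ cₙ - cₙ₊₁`, hence `(cₙ)`
itself satisfies `α ≡ Sα`, and its class is a limit of the ultrafilter.
-/

open Nat Topology

local notation "mkC" => Ideal.Quotient.mk C0

attribute [local instance] sigmaTop

theorem Int.dvd_sub_of_forall_dvd_sub_succ {p : ℤ} {c : ℕ → ℤ} {N : ℕ}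
    (h : ∀ k, N ≤ k → p ∣ c k - c (k + 1)) {k : ℕ} (hk : N ≤ k) : p ∣ c N - c k := by
  induction k, hk using Nat.le_induction with
  | base => simp
  | succ k hk ih => simpa using dvd_add ih (h k hk)

theorem Int.dvd_factorial {m : ℤ} (hm : 0 < m) {k : ℕ} (hk : m.toNat ≤ k) : m ∣ (k ! : ℤ) := by
  simpa [Int.toNat_of_nonneg hm.le] using
    Int.natCast_dvd_natCast.mpr (Nat.dvd_factorial (by omega) hk)

theorem RepsPolyadic.sub_const {α : ℕ → ℤ} (hα : RepsPolyadic α) (m : ℤ) :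
    RepsPolyadic (fun k => α k - m) := by
  simpa [RepsPolyadic] using hα

theorem RepsPolyadic.ediv {α : ℕ → ℤ} (hα : RepsPolyadic α) {p : ℤ} (hp : 0 < p)
    (h : ∀ᶠ k in cofinite, p ∣ α k) : RepsPolyadic (fun k => α k / p) := by
  intro n hn
  filter_upwards [hα (p * n) (mul_pos hp hn), h, Nat.succ_injective.tendsto_cofinite.eventually h]
    with k hdiff hk hk1
  rw [← Int.mul_ediv_cancel' hk, ← Int.mul_ediv_cancel' hk1, ← mul_sub] at hdiff
  exact (mul_dvd_mul_iff_left hp.ne').mp hdiff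

namespace Polyadic

theorem coe_intCast (m : ℤ) : ((m : Polyadic) : CQuot) = mkC (fun _ => m) := by
  rw [SubringClass.coe_intCast]
  exact (map_intCast mkC m).symm

theorem coe_sub_intCast {α : ℕ → ℤ} {x : Polyadic} (hx : mkC α = x) (m : ℤ) :
    mkC (fun k => α k - m) = ((x - m : Polyadic) : CQuot) := by
  rw [AddSubgroupClass.coe_sub, coe_intCast, ← hx, ← map_sub]
  rfl

theorem mk_eq_mk_of_eventuallyEq {α β : ℕ → ℤ} (h : α =ᶠ[cofinite] β) : mkC α = mkC β :=
  Ideal.Quotient.eq.mpr fun n _ => h.mono fun k hk => by simp [hk]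

theorem intCast_dvd_iff {α : ℕ → ℤ} (hα : RepsPolyadic α) {x : Polyadic} (hx : mkC α = x)
    {p : ℤ} (hp : 0 < p) : (p : Polyadic) ∣ x ↔ ∀ᶠ k in cofinite, p ∣ α k := by
  constructor
  · rintro ⟨y, rfl⟩
    obtain ⟨β, -, hβ⟩ := y.2
    have hC0 : α - (fun _ => p) * β ∈ C0 := by
      rw [← Ideal.Quotient.eq, hx, map_mul, ← coe_intCast, hβ]
      rfl
    filter_upwards [hC0 p hp] with k hk
    simpa using dvd_add hk (dvd_mul_right p (β k))
  · intro h
    refine ⟨⟨mkC (fun k => α k / p), _, hα.ediv hp h, rfl⟩, Subtype.ext ?_⟩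
    rw [Subring.coe_mul, coe_intCast, ← hx, ← map_mul]
    refine mk_eq_mk_of_eventuallyEq ?_
    filter_upwards [h] with k hk
    simp [Int.mul_ediv_cancel' hk]

theorem intCast_dvd_intCast_iff {p : ℤ} (hp : 0 < p) (m : ℤ) :
    (p : Polyadic) ∣ (m : Polyadic) ↔ p ∣ m :=
  (intCast_dvd_iff (fun _ _ => .of_forall fun _ => by simp) (coe_intCast m).symm hp).trans
    eventually_const

theorem exists_intCast_dvd_sub (x : Polyadic) {p : ℤ} (hp : 0 < p) :
    ∃ m : ℤ, (p : Polyadic) ∣ x - m := by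
  obtain ⟨α, hα, hx⟩ := x.2
  obtain ⟨N, hN⟩ := eventually_atTop.mp (Nat.cofinite_eq_atTop ▸ hα p hp)
  refine ⟨α N, (intCast_dvd_iff (hα.sub_const _) (coe_sub_intCast hx _) hp).mpr ?_⟩
  rw [Nat.cofinite_eq_atTop, eventually_atTop]
  exact ⟨N, fun k hk => dvd_sub_comm.mp (Int.dvd_sub_of_forall_dvd_sub_succ hN hk)⟩

theorem eq_zero_of_forall_intCast_dvd {x : Polyadic} (h : ∀ p : ℤ, 0 < p → (p : Polyadic) ∣ x) :
    x = 0 := by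
  obtain ⟨α, hα, hx⟩ := x.2
  refine Subtype.ext ?_
  rw [← hx, ZeroMemClass.coe_zero, Ideal.Quotient.eq_zero_iff_mem]
  exact fun p hp => (intCast_dvd_iff hα hx hp).mp (h p hp)

theorem exists_intCast_dvd_sub_factorial {c : ℕ → ℤ} (hc : ∀ n, (n ! : ℤ) ∣ c n - c (n + 1)) :
    ∃ x : Polyadic, ∀ n, ((n ! : ℤ) : Polyadic) ∣ x - c n := by
  have hrep : RepsPolyadic c := fun m hm => by
    rw [Nat.cofinite_eq_atTop, eventually_atTop]
    exact ⟨m.toNat, fun k hk => (Int.dvd_factorial hm hk).trans (hc k)⟩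
  refine ⟨⟨mkC c, c, hrep, rfl⟩, fun n => ?_⟩
  rw [intCast_dvd_iff (hrep.sub_const _) (coe_sub_intCast rfl _) (by positivity),
    Nat.cofinite_eq_atTop, eventually_atTop]
  refine ⟨n, fun k hk => dvd_sub_comm.mp (Int.dvd_sub_of_forall_dvd_sub_succ (fun j hj => ?_) hk)⟩
  exact (Int.natCast_dvd_natCast.mpr (factorial_dvd_factorial hj)).trans (hc j)

theorem mem_grid_iff {p : ℤ} {a x : Polyadic} : x ∈ Grid p a ↔ (p : Polyadic) ∣ x - a :=
  ⟨by rintro ⟨γ, hγ, rfl⟩; rw [add_sub_cancel_left]; exact hγ,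
    fun h => ⟨x - a, h, (add_sub_cancel a x).symm⟩⟩

theorem mem_grid_self (p : ℤ) (a : Polyadic) : a ∈ Grid p a :=
  mem_grid_iff.mpr (by simp)

theorem grid_subset_grid {p q : ℤ} {a b : Polyadic} (hpq : (p : Polyadic) ∣ q)
    (hb : b ∈ Grid p a) : Grid q b ⊆ Grid p a := fun z hz => by
  rw [mem_grid_iff] at *
  simpa using dvd_add (hpq.trans hz) hb

theorem isOpen_grid {p : ℤ} (hp : 0 < p) (a : Polyadic) : IsOpen (Grid p a) :=
  TopologicalSpace.isOpen_generateFrom_of_mem ⟨p, hp, a, rfl⟩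

theorem t2Space : T2Space Polyadic := by
  refine ⟨fun x y hxy => ?_⟩
  obtain ⟨p, hp, hp_ndvd⟩ : ∃ p : ℤ, 0 < p ∧ ¬(p : Polyadic) ∣ x - y := by
    by_contra! h
    exact hxy (sub_eq_zero.mp (eq_zero_of_forall_intCast_dvd h))
  refine ⟨Grid p x, Grid p y, isOpen_grid hp x, isOpen_grid hp y, mem_grid_self p x,
    mem_grid_self p y, Set.disjoint_left.mpr fun z hzx hzy => hp_ndvd ?_⟩
  rw [mem_grid_iff] at hzx hzy
  simpa using dvd_sub hzy hzx

theorem exists_grid_mem_ultrafilter (F : Ultrafilter Polyadic) {p : ℤ} (hp : 0 < p) :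
    ∃ m : ℤ, Grid p m ∈ F := by
  have hcover : (⋃ m ∈ Set.Ico 0 p, Grid p m) ∈ F := by
    refine Filter.mem_of_superset Filter.univ_mem fun x _ => ?_
    obtain ⟨m, hm⟩ := exists_intCast_dvd_sub x hp
    refine Set.mem_biUnion (x := m % p) ⟨Int.emod_nonneg _ hp.ne', Int.emod_lt_of_pos _ hp⟩
      (mem_grid_iff.mpr ?_)
    have hsplit : x - ((m % p : ℤ) : Polyadic) = (x - m) + p * (m / p : ℤ) := by
      rw [Int.emod_def]; push_cast; ring
    rw [hsplit]
    exact dvd_add hm (dvd_mul_right _ _)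
  obtain ⟨m, -, hm⟩ := (Ultrafilter.finite_biUnion_mem_iff (Set.finite_Ico 0 p)).mp hcover
  exact ⟨m, hm⟩

theorem exists_le_nhds (F : Ultrafilter Polyadic) : ∃ x : Polyadic, ↑F ≤ 𝓝 x := by
  choose c hc using fun n : ℕ => exists_grid_mem_ultrafilter F (p := n !) (by positivity)
  have hcoh : ∀ n, (n ! : ℤ) ∣ c n - c (n + 1) := by
    intro n
    obtain ⟨z, hz, hz'⟩ := F.nonempty_of_mem (inter_mem (hc n) (hc (n + 1)))
    have hdvd : ((n ! : ℤ) : Polyadic) ∣ ((n + 1)! : ℤ) :=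
      Int.cast_dvd_cast _ _ (Int.natCast_dvd_natCast.mpr (factorial_dvd_factorial n.le_succ))
    have hz'' := grid_subset_grid hdvd (mem_grid_self _ _) hz'
    rw [mem_grid_iff] at hz hz''
    rw [← intCast_dvd_intCast_iff (by positivity)]
    simpa using dvd_sub hz'' hz
  obtain ⟨x, hx⟩ := exists_intCast_dvd_sub_factorial hcoh
  refine ⟨x, tendsto_id'.mp (TopologicalSpace.tendsto_nhds_generateFrom_iff.mpr ?_)⟩
  rintro _ ⟨p, hp, a, rfl⟩ hxa
  have hp_dvd : (p : Polyadic) ∣ (p.toNat ! : ℤ) :=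
    Int.cast_dvd_cast _ _ (Int.dvd_factorial hp le_rfl)
  have hcx : (c p.toNat : Polyadic) ∈ Grid (p.toNat !) x :=
    mem_grid_iff.mpr (dvd_sub_comm.mp (hx _))
  exact mem_of_superset (hc p.toNat)
    ((grid_subset_grid dvd_rfl hcx).trans (grid_subset_grid hp_dvd hxa))

end Polyadic

/-- The polyadic ring `(𝒫, σ)` is a compact Hausdorff space. -/
theorem polyadic_compact_hausdorff :
    @CompactSpace ↥Polyadic sigmaTop ∧ @T2Space ↥Polyadic sigmaTop := by
  refine ⟨isCompact_univ_iff.mp (isCompact_iff_ultrafilter_le_nhds.mpr fun F _ => ?_),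
    Polyadic.t2Space⟩
  obtain ⟨x, hx⟩ := Polyadic.exists_le_nhds F
  exact ⟨x, Set.mem_univ x, hx⟩
end
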